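/- arXiv:2505.08633 — 2 statements merged into one kernel-verified Lean document; each statement's English description precedes it below -/
import Mathlib

section
/- Let n be a finite type with decidable equality, let U : n → n → Matrix n n ℂ be a family of operators, and let GHZ : n × n × n → ℂ be defined by GHZ (i,j,k) = if i = j ∧ j = k then 1 else 0. Define M := Σᵢ Σⱼ (E i) ⊗ₖ ((E j) ⊗ₖ U i j) and N := Σᵢ (E i) ⊗ₖ U i i, where E i = Matrix.stdBasisMatrix i i (1 : ℂ). Then M *ᵥ GHZ = ((1 : Matrix n n ℂ) ⊗ₖ N) *ᵥ GHZ, i.e. the doubly-controlled operator Σᵢⱼ |ij⟩⟨ij| ⊗ U_{ij} applied to the GHZ state over the ordered registers (p, r, q) equals the singly-controlled operator Σᵢ |i⟩⟨i| ⊗ U_{ii} acting on registers (r, q) (extended by the identity on p) applied to the same GHZ state. -/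
open Matrix Kronecker

/-- Unnormalized GHZ vector `Σₖ |k⟩ ⊗ |k⟩ ⊗ |k⟩`. -/
noncomputable def GHZ (n : Type*) [DecidableEq n] : n × n × n → ℂ :=
  fun p => if p.1 = p.2.1 ∧ p.2.1 = p.2.2 then 1 else 0

/-- The projector `|i⟩⟨i|`. -/
noncomputable def E {n : Type*} [DecidableEq n] (i : n) : Matrix n n ℂ :=
  Matrix.single i i (1 : ℂ)

theorem doubly_controlled_ghz_eq_singly_controlled
    {n : Type*} [Fintype n] [DecidableEq n] (U : n → n → Matrix n n ℂ) :
    (∑ i : n, ∑ j : n, (E i) ⊗ₖ ((E j) ⊗ₖ U i j)) *ᵥ GHZ n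
      = ((1 : Matrix n n ℂ) ⊗ₖ (∑ i : n, (E i) ⊗ₖ U i i)) *ᵥ GHZ n := by
  funext ⟨a,b,c⟩
  simp [mulVec, dotProduct, GHZ, E, Matrix.sum_apply, kroneckerMap_apply, Matrix.single,
    Matrix.one_apply, Fintype.sum_prod_type, mul_ite, ite_mul, mul_comm, ite_and,
    Finset.sum_ite_eq, Finset.sum_ite_eq']
  aesop
end

section
/- Let n be a finite type with decidable equality, let U : n → n → Matrix n n ℂ, and let GHZ : n × n × n → ℂ be defined by GHZ (i,j,k) = if i = j ∧ j = k then 1 else 0. With E i = Matrix.stdBasisMatrix i i (1 : ℂ), one has ((1 : Matrix n n ℂ) ⊗ₖ (Σᵢ (E i) ⊗ₖ U i i)) *ᵥ GHZ = (Σᵢ (E i) ⊗ₖ ((1 : Matrix n n ℂ) ⊗ₖ U i i)) *ᵥ GHZ, i.e. applying the controlled operator Σᵢ |i⟩⟨i| ⊗ U_{ii} with control on the second register and target on the third register to the GHZ state gives the same vector as applying it with control on the first register and target on the third register. -/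
open Matrix Kronecker

theorem controlled_second_eq_controlled_first_on_ghz
    {n : Type*} [Fintype n] [DecidableEq n] (U : n → n → Matrix n n ℂ) :
    ((1 : Matrix n n ℂ) ⊗ₖ (∑ i : n, (E i) ⊗ₖ U i i)) *ᵥ GHZ n
      = (∑ i : n, (E i) ⊗ₖ ((1 : Matrix n n ℂ) ⊗ₖ U i i)) *ᵥ GHZ n := by
  funext ⟨a, b, c⟩
  simp [mulVec, dotProduct, GHZ, E, kroneckerMap_apply, Matrix.one_apply,
    Matrix.single, Fintype.sum_prod_type, Finset.sum_ite_eq,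
    Matrix.sum_apply, ite_and, mul_comm]
  split <;> simp_all
end
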